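/- Let G = GL_2(F_q) with q odd and B the subgroup of upper triangular matrices. Then the determinant of the permutation representation ℂ[G/B] (equivalently, det of Ind_B^G of the trivial representation) is the character sgn_G: g ↦ sign character given by the Legendre symbol of det(g), i.e., the unique linear character of G of order 2. -/

import Mathlib

/-!
The sign character `χ` of `GL₂(F)` acting on `G ⧸ B` is a homomorphism to `{±1}`. It kills
transvections, which have odd order `p`, and scalars, which are central and lie in `B`. As every
invertible matrix is a product of transvections and a diagonal matrix, and
`diag(a, b) = diag(1, ab / a²) · a` with `χ` trivial on squares, `χ = ψ ∘ det` where
`ψ c = χ (diag(1, c))`. Identifying `G ⧸ B` with the projective line `F ∪ {∞}`, `diag(1, c)`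
acts by `x ↦ c x`, so for a generator `c` of the cyclic group `Fˣ` it is a cycle of even length
`q - 1`, hence odd. Thus `ψ` sends a generator to `-1`, i.e. `ψ c = 1` exactly when `c` is a
square.
-/

theorem Int.units_eq_one_of_pow_eq_one_of_odd {u : ℤˣ} {n : ℕ} (hu : u ^ n = 1) (hn : Odd n) :
    u = 1 := by
  rwa [Int.units_pow_eq_pow_mod_two, Nat.odd_iff.1 hn, pow_one] at hu

theorem MonoidHom.apply_eq_ite_isSquare_of_generator {G : Type*} [Group G]
    [DecidablePred (IsSquare : G → Prop)] (φ : G →* ℤˣ)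
    {γ : G} (hγ : ∀ x, x ∈ Subgroup.zpowers γ) (hφ : φ γ = -1) (x : G) :
    φ x = if IsSquare x then 1 else -1 := by
  obtain ⟨k, rfl⟩ := Subgroup.mem_zpowers_iff.1 (hγ x)
  rw [map_zpow, hφ]
  rcases Int.even_or_odd k with ⟨m, rfl⟩ | hk
  · rw [if_pos ⟨γ ^ m, zpow_add γ m m⟩, Even.neg_one_zpow ⟨m, rfl⟩]
  · have hsq : ¬ IsSquare (γ ^ k) := by
      rintro ⟨y, hy⟩
      have h := congrArg φ hy
      rw [map_mul, Int.units_mul_self, map_zpow, hφ, hk.neg_one_zpow] at h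
      exact absurd h (by decide)
    rw [if_neg hsq, hk.neg_one_zpow]

theorem MulAction.toPermHom_quotient_eq_one_of_mem_center {G : Type*} [Group G]
    {H : Subgroup G} (hH : Subgroup.center G ≤ H) {z : G} (hz : z ∈ Subgroup.center G) :
    MulAction.toPermHom G (G ⧸ H) z = 1 := by
  rw [← MonoidHom.mem_ker, ← Subgroup.normalCore_eq_ker]
  exact Subgroup.normal_le_normalCore.mpr hH hz

theorem FiniteField.sign_toPerm_of_forall_mem_zpowers {K : Type*} [Field K] [Fintype K]
    [DecidableEq K] (hodd : Odd (Fintype.card K)) {γ : Kˣ}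
    (hγ : ∀ x, x ∈ Subgroup.zpowers γ) :
    Equiv.Perm.sign (MulAction.toPerm γ : Equiv.Perm K) = -1 := by
  have hγ1 : (γ : K) ≠ 1 := by
    intro h
    have hcard : Fintype.card Kˣ = 1 := Fintype.card_eq_one_iff.2 ⟨1, fun x ↦ by
      obtain ⟨k, rfl⟩ := Subgroup.mem_zpowers_iff.1 (hγ x)
      simp [Units.val_eq_one.1 h]⟩
    rw [Fintype.card_units] at hcard
    have := Fintype.one_lt_card (α := K)
    obtain ⟨m, hm⟩ := hodd
    omega
  have hfixed (x : K) : γ • x = x ↔ x = 0 := by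
    simp [Units.smul_def, mul_left_eq_self₀, hγ1]
  have hcycle : (MulAction.toPerm γ : Equiv.Perm K).IsCycle := by
    refine ⟨1, (not_congr (hfixed 1)).2 one_ne_zero, fun y hy ↦ ?_⟩
    obtain ⟨k, hk⟩ :=
      Subgroup.mem_zpowers_iff.1 (hγ (Units.mk0 y ((not_congr (hfixed y)).1 hy)))
    refine ⟨k, ?_⟩
    change (MulAction.toPermHom Kˣ K γ ^ k) 1 = y
    rw [← map_zpow]
    simp [MulAction.toPermHom, Units.smul_def, hk]
  have hsupport : (MulAction.toPerm γ : Equiv.Perm K).support = {0}ᶜ := by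
    ext x
    simp [hfixed]
  rw [hcycle.sign, hsupport, Finset.card_compl, Finset.card_singleton,
    (Nat.Odd.sub_odd hodd odd_one).neg_one_pow]

namespace Matrix.GeneralLinearGroup

section Field

variable {n K : Type*} [Fintype n] [DecidableEq n] [Field K]

theorem monoidHom_eq_comp_det_of_transvection_of_diagonal {M : Type*} [Monoid M]
    (χ : GL n K →* M) (ψ : Kˣ →* M)
    (htransvection : ∀ (t : TransvectionStruct n K) (g : GL n K),
      (g : Matrix n n K) = t.toMatrix → χ g = 1)
    (hdiagonal : ∀ (D : n → K) (g : GL n K),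
      (g : Matrix n n K) = diagonal D → χ g = ψ (det g)) :
    χ = ψ.comp det := by
  ext g
  refine diagonal_transvection_induction_of_det_ne_zero
    (fun A ↦ ∀ g : GL n K, (g : Matrix n n K) = A → χ g = ψ (det g)) g g.det_ne_zero
    (fun D _ ↦ hdiagonal D) (fun t g hg ↦ ?_) (fun A B hA hB hPA hPB g hg ↦ ?_) g rfl
  · have hdet : det g = 1 := Units.ext (by simp [hg])
    rw [htransvection t g hg, hdet, map_one]
  · obtain rfl : g = mkOfDetNeZero A hA * mkOfDetNeZero B hB := Units.ext hg
    rw [map_mul, map_mul, map_mul, hPA _ rfl, hPB _ rfl]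

theorem pow_card_eq_one_of_val_eq_transvection [Fintype K] (t : TransvectionStruct n K)
    {g : GL n K} (hg : (g : Matrix n n K) = t.toMatrix) : g ^ Fintype.card K = 1 := by
  suffices ∀ k : ℕ, ((g ^ k : GL n K) : Matrix n n K) = transvection t.i t.j (k • t.c) from
    Units.ext (by rw [this, nsmul_eq_mul, FiniteField.cast_card_eq_zero, zero_mul,
      transvection_zero, Units.val_one])
  intro k
  induction k with
  | zero => simp
  | succ k ih =>
    rw [pow_succ, Units.val_mul, ih, hg, TransvectionStruct.toMatrix,
      transvection_mul_transvection_same _ _ t.hij, succ_nsmul]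

end Field

def diagonalMulSingle {n R : Type*} [Fintype n] [DecidableEq n] [CommRing R] (i : n) :
    Rˣ →* GL n R :=
  (Units.map (diagonalRingHom n R).toMonoidHom).comp
    ((MulEquiv.piUnits.symm : (n → Rˣ) ≃* (n → R)ˣ).toMonoidHom.comp
      (MonoidHom.mulSingle (fun _ : n ↦ Rˣ) i))

theorem val_diagonalMulSingle {n R : Type*} [Fintype n] [DecidableEq n] [CommRing R] (i : n)
    (c : Rˣ) : (diagonalMulSingle i c : Matrix n n R) = diagonal (Pi.mulSingle i (c : R)) := by
  change diagonal (fun j ↦ ((Pi.mulSingle (M := fun _ ↦ Rˣ) i c j : Rˣ) : R)) = _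
  congr 1
  ext j
  exact Pi.apply_mulSingle (fun _ ↦ Units.val) (fun _ ↦ Units.val_one) i c j

section TwoByTwo

variable {K : Type*} [Field K] {B : Subgroup (GL (Fin 2) K)}

theorem apply_eq_apply_diagonalMulSingle_det (χ : GL (Fin 2) K →* ℤˣ)
    (hscalar : ∀ u, χ (scalar (Fin 2) u) = 1) {D : Fin 2 → K} {g : GL (Fin 2) K}
    (hg : (g : Matrix (Fin 2) (Fin 2) K) = diagonal D) :
    χ g = χ (diagonalMulSingle 1 (det g)) := by
  have hdet : D 0 * D 1 ≠ 0 := by simpa [hg, Fin.prod_univ_two] using g.det_ne_zero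
  set u := Units.mk0 (D 0) (left_ne_zero_of_mul hdet)
  have hg' : g = diagonalMulSingle 1 (det g * u⁻¹ ^ 2) * scalar (Fin 2) u := by
    refine Units.ext ?_
    rw [Units.val_mul, val_diagonalMulSingle, coe_scalar, hg]
    ext i j
    fin_cases i <;> fin_cases j <;> simp [u, hg, Fin.prod_univ_two]
    field_simp [left_ne_zero_of_mul hdet]
  calc χ g = χ (diagonalMulSingle 1 (det g * u⁻¹ ^ 2) * scalar (Fin 2) u) := congrArg χ hg'
    _ = χ (diagonalMulSingle 1 (det g)) := by
      rw [map_mul, hscalar, mul_one, map_mul, map_mul, map_pow, map_pow, Int.units_sq, mul_one]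

theorem center_le_of_forall_mem_iff
    (hB : ∀ g : GL (Fin 2) K, g ∈ B ↔ (g : Matrix (Fin 2) (Fin 2) K) 1 0 = 0) :
    Subgroup.center (GL (Fin 2) K) ≤ B := fun z hz ↦ by
  obtain ⟨a, ha⟩ := mem_center_iff_val_mem_range_scalar.1 hz
  simp [hB, ← ha]

theorem apply_one_zero_ne_zero_of_apply_zero_zero_eq_zero {g : GL (Fin 2) K} (h : g 0 0 = 0) :
    g 1 0 ≠ 0 := by
  intro h'
  apply g.det_ne_zero
  rw [det_fin_two]
  simp [h, h']

theorem inv_mul_apply_one_zero (g h : GL (Fin 2) K) :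
    (g⁻¹ * h) 1 0 = (det g : K)⁻¹ * (g 0 0 * h 1 0 - g 1 0 * h 0 0) := by
  simp [coe_units_inv, inv_def, adjugate_fin_two, mul_apply, Fin.sum_univ_two]
  ring

variable [DecidableEq K]

/-- The point of `ℙ¹(K) = K ∪ {∞}` spanned by the first column `(a, c)` of `g`, in the affine
coordinate `c / a`; `none` is the point `(0 : 1)`. -/
noncomputable def firstColumnPoint (g : GL (Fin 2) K) : Option K :=
  if g 0 0 = 0 then none else some (g 1 0 / g 0 0)

theorem firstColumnPoint_eq_iff {g h : GL (Fin 2) K} :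
    firstColumnPoint g = firstColumnPoint h ↔ g 0 0 * h 1 0 = g 1 0 * h 0 0 := by
  have hg := apply_one_zero_ne_zero_of_apply_zero_zero_eq_zero (g := g)
  have hh := apply_one_zero_ne_zero_of_apply_zero_zero_eq_zero (g := h)
  unfold firstColumnPoint
  by_cases hg0 : g 0 0 = 0 <;> by_cases hh0 : h 0 0 = 0 <;> simp [hg0, hh0, hg, hh]
  rw [div_eq_div_iff hg0 hh0, eq_comm, mul_comm (h 1 0), mul_comm (g 1 0)]

theorem inv_mul_apply_one_zero_eq_zero_iff {g h : GL (Fin 2) K} :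
    (g⁻¹ * h) 1 0 = 0 ↔ firstColumnPoint g = firstColumnPoint h := by
  rw [inv_mul_apply_one_zero, mul_eq_zero, inv_eq_zero, sub_eq_zero, firstColumnPoint_eq_iff]
  simp [g.det_ne_zero]

theorem firstColumnPoint_surjective : Function.Surjective (firstColumnPoint (K := K))
  | none => ⟨mkOfDetNeZero !![0, 1; 1, 0] (by simp), by simp [firstColumnPoint]⟩
  | some x => ⟨mkOfDetNeZero !![1, 0; x, 1] (by simp), by simp [firstColumnPoint]⟩

theorem firstColumnPoint_diagonalMulSingle_mul (c : Kˣ) (g : GL (Fin 2) K) :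
    firstColumnPoint (diagonalMulSingle (1 : Fin 2) c * g) =
      (firstColumnPoint g).map (c • ·) := by
  have h00 : (diagonalMulSingle (1 : Fin 2) c * g) 0 0 = g 0 0 := by
    simp [val_diagonalMulSingle]
  have h10 : (diagonalMulSingle (1 : Fin 2) c * g) 1 0 = c * g 1 0 := by
    simp [val_diagonalMulSingle]
  unfold firstColumnPoint
  rw [h00, h10]
  split_ifs <;> simp [Units.smul_def, mul_div_assoc]

noncomputable def quotientEquivOption
    (hB : ∀ g : GL (Fin 2) K, g ∈ B ↔ (g : Matrix (Fin 2) (Fin 2) K) 1 0 = 0) :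
    GL (Fin 2) K ⧸ B ≃ Option K :=
  (Quotient.congrRight fun _ _ ↦ QuotientGroup.leftRel_apply.trans
      ((hB _).trans inv_mul_apply_one_zero_eq_zero_iff)).trans
    (Setoid.quotientKerEquivOfSurjective _ firstColumnPoint_surjective)

theorem quotientEquivOption_mk
    (hB : ∀ g : GL (Fin 2) K, g ∈ B ↔ (g : Matrix (Fin 2) (Fin 2) K) 1 0 = 0)
    (g : GL (Fin 2) K) :
    quotientEquivOption hB g = firstColumnPoint g :=
  rfl

theorem toPerm_diagonalMulSingle
    (hB : ∀ g : GL (Fin 2) K, g ∈ B ↔ (g : Matrix (Fin 2) (Fin 2) K) 1 0 = 0) (c : Kˣ) :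
    MulAction.toPerm (diagonalMulSingle (1 : Fin 2) c) =
      (quotientEquivOption hB).symm.permCongr (Equiv.optionCongr (MulAction.toPerm c)) := by
  ext x
  induction x using QuotientGroup.induction_on with
  | H g =>
    rw [Equiv.permCongr_apply, Equiv.symm_symm, Equiv.eq_symm_apply]
    change quotientEquivOption hB
      ((diagonalMulSingle (1 : Fin 2) c * g : GL (Fin 2) K) : GL (Fin 2) K ⧸ B) = _
    rw [quotientEquivOption_mk, quotientEquivOption_mk, firstColumnPoint_diagonalMulSingle_mul]
    rfl

theorem sign_toPerm_diagonalMulSingle [Fintype K] [Fintype (GL (Fin 2) K ⧸ B)]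
    [DecidableEq (GL (Fin 2) K ⧸ B)]
    (hB : ∀ g : GL (Fin 2) K, g ∈ B ↔ (g : Matrix (Fin 2) (Fin 2) K) 1 0 = 0) (c : Kˣ) :
    Equiv.Perm.sign
        (MulAction.toPerm (diagonalMulSingle (1 : Fin 2) c) : Equiv.Perm (GL (Fin 2) K ⧸ B)) =
      Equiv.Perm.sign (MulAction.toPerm c : Equiv.Perm K) := by
  rw [toPerm_diagonalMulSingle hB, Equiv.Perm.sign_permCongr, Equiv.optionCongr_sign]

end TwoByTwo

end Matrix.GeneralLinearGroup

open scoped Classical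

open Matrix.GeneralLinearGroup in
theorem det_perm_rep_GL2_mod_Borel (F : Type*) [Field F] [Fintype F] [DecidableEq F]
    (hodd : Odd (Fintype.card F))
    (B : Subgroup (GL (Fin 2) F))
    (hB : ∀ g : GL (Fin 2) F, g ∈ B ↔ (g : Matrix (Fin 2) (Fin 2) F) 1 0 = 0)
    [Fintype (GL (Fin 2) F ⧸ B)] [DecidableEq (GL (Fin 2) F ⧸ B)]
    (g : GL (Fin 2) F) :
    Equiv.Perm.sign (MulAction.toPermHom (GL (Fin 2) F) (GL (Fin 2) F ⧸ B) g) =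
      (if IsSquare (Matrix.GeneralLinearGroup.det g) then 1 else -1) := by
  let χ := Equiv.Perm.sign.comp (MulAction.toPermHom (GL (Fin 2) F) (GL (Fin 2) F ⧸ B))
  have hscalar (u : Fˣ) : χ (scalar (Fin 2) u) = 1 := by
    have hu : scalar (Fin 2) u ∈ Subgroup.center (GL (Fin 2) F) :=
      mem_center_iff_val_mem_range_scalar.2 ⟨u, rfl⟩
    simp only [χ, MonoidHom.comp_apply, map_one,
      MulAction.toPermHom_quotient_eq_one_of_mem_center (center_le_of_forall_mem_iff hB) hu]
  have hχ : χ = (χ.comp (diagonalMulSingle 1)).comp det :=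
    monoidHom_eq_comp_det_of_transvection_of_diagonal χ _
      (fun t _ hg ↦ Int.units_eq_one_of_pow_eq_one_of_odd
        (by rw [← map_pow, pow_card_eq_one_of_val_eq_transvection t hg, map_one]) hodd)
      (fun _ _ hg ↦ apply_eq_apply_diagonalMulSingle_det χ hscalar hg)
  obtain ⟨γ, hγ⟩ := IsCyclic.exists_generator (α := Fˣ)
  have hχγ : χ.comp (diagonalMulSingle 1) γ = -1 :=
    (sign_toPerm_diagonalMulSingle hB γ).trans
      (FiniteField.sign_toPerm_of_forall_mem_zpowers hodd hγ)
  change χ g = _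
  rw [hχ]
  exact (χ.comp _).apply_eq_ite_isSquare_of_generator hγ hχγ (det g)
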